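/- arXiv:2201.04539 — 4 statements merged into one kernel-verified Lean document; each statement's English description precedes it below -/
import Mathlib

section
/- For every subprobability measure ν on ℝ^d there exists a nonnegative function V ∈ C²(ℝ^d) with compact sublevel sets {V ≤ c} for every c ≥ 0, uniformly bounded first and second order partial derivatives, and ∫ V dν < ∞. -/
/-!
Since `ν` is finite, its tails `ν {‖x‖ ≥ R}` tend to zero, so there are radii `R k` with
`ν {‖x‖ ≥ R k} ≤ 2⁻ᵏ`. The sum `ψ` of ramps rising from `0` to `1` on `[R k, R k + 2ᵏ]` is
`2`-Lipschitz (the slopes `2⁻ᵏ` are summable), tends to infinity, and `∫ ψ ‖x‖ dν ≤ ∑ 2⁻ᵏ`.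
Mollifying `W = ψ ∘ ‖·‖` with a normalized bump `ρ` gives a smooth `V = ρ ⋆ W` within a bounded
distance of `W`. Its first derivative is bounded because `V` is Lipschitz, and its second because
`DV = Dρ ⋆ W` is Lipschitz too.
-/

open MeasureTheory Set Filter Topology ContinuousLinearMap Metric
open scoped NNReal ENNReal Convolution

theorem LipschitzWith.tsum {ι α : Type*} [PseudoMetricSpace α] {F : ι → α → ℝ} {K : ι → ℝ≥0}
    {C : ℝ≥0} (hK : HasSum K C) (hF : ∀ i, LipschitzWith (K i) (F i))
    (hs : ∀ x, Summable fun i ↦ F i x) : LipschitzWith C fun x ↦ ∑' i, F i x := by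
  refine LipschitzWith.of_dist_le_mul fun x y ↦ ?_
  rw [Real.dist_eq, ← (hs x).tsum_sub (hs y)]
  refine tsum_of_norm_bounded (f := fun i ↦ F i x - F i y)
    ((NNReal.hasSum_coe.2 hK).mul_right (dist x y)) fun i ↦ ?_
  rw [← dist_eq_norm]
  exact (hF i).dist_le_mul x y

noncomputable def rampSum (R : ℕ → ℝ) (r : ℝ) : ℝ := ∑' k, min 1 ((r - R k)⁺ / 2 ^ k)

section rampSum

variable {R : ℕ → ℝ}

lemma summable_ramp (hR : ∀ k, 0 ≤ R k) (r : ℝ) :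
    Summable fun k ↦ min 1 ((r - R k)⁺ / 2 ^ k) := by
  refine Summable.of_nonneg_of_le (fun k ↦ by positivity) (fun k ↦ ?_)
    (summable_geometric_two.mul_left r⁺)
  calc min 1 ((r - R k)⁺ / 2 ^ k) ≤ (r - R k)⁺ / 2 ^ k := min_le_right _ _
    _ ≤ r⁺ * (1 / 2) ^ k := by
      rw [one_div, inv_pow, ← div_eq_mul_inv]
      gcongr
      exact posPart_mono (sub_le_self _ (hR k))

lemma rampSum_nonneg (r : ℝ) : 0 ≤ rampSum R r :=
  tsum_nonneg fun k ↦ by positivity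

lemma lipschitzWith_ramp (a : ℝ) (k : ℕ) :
    LipschitzWith ((2⁻¹ : ℝ≥0) ^ k) fun r : ℝ ↦ min 1 ((r - a)⁺ / 2 ^ k) := by
  have h := ((lipschitzWith_smul ((2 : ℝ) ^ k)⁻¹).comp
    (lipschitzWith_posPart.comp (isometry_add_right (-a)).lipschitz)).const_min 1
  convert h using 2
  · ext; simp [nnnorm_inv, nnnorm_pow]
  · simp [div_eq_inv_mul, sub_eq_add_neg]

lemma lipschitzWith_rampSum (hR : ∀ k, 0 ≤ R k) : LipschitzWith 2 (rampSum R) := by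
  refine LipschitzWith.tsum ?_ (fun k ↦ lipschitzWith_ramp (R k) k) (summable_ramp hR)
  rw [← NNReal.hasSum_coe]
  simpa using hasSum_geometric_two

lemma tendsto_rampSum (hR : ∀ k, 0 ≤ R k) : Tendsto (rampSum R) atTop atTop := by
  refine tendsto_atTop.2 fun M ↦ ?_
  obtain ⟨n, hn⟩ := exists_nat_ge M
  have : ∀ᶠ r in atTop, ∀ k ∈ Finset.range n, R k + 2 ^ k ≤ r :=
    (Finset.eventually_all _).2 fun k _ ↦ eventually_ge_atTop _
  filter_upwards [this] with r hr
  have hone : ∀ k ∈ Finset.range n, min 1 ((r - R k)⁺ / 2 ^ k) = 1 := fun k hk ↦ by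
    refine min_eq_left ((one_le_div (by positivity)).2 ?_)
    exact (le_sub_iff_add_le'.2 (hr k hk)).trans (le_posPart _)
  calc M ≤ ∑ k ∈ Finset.range n, min 1 ((r - R k)⁺ / 2 ^ k) := by
        simpa [Finset.sum_congr rfl hone] using hn
    _ ≤ rampSum R r := (summable_ramp hR r).sum_le_tsum _ fun k _ ↦ by positivity

lemma lintegral_rampSum_comp_le {X : Type*} [MeasurableSpace X] (ν : Measure X) {f : X → ℝ}
    (hf : Measurable f) (hR : ∀ k, 0 ≤ R k) :
    ∫⁻ x, ENNReal.ofReal (rampSum R (f x)) ∂ν ≤ ∑' k, ν {x | R k ≤ f x} := by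
  have hterm : ∀ k x, ENNReal.ofReal (min 1 ((f x - R k)⁺ / 2 ^ k)) ≤
      {x | R k ≤ f x}.indicator 1 x := fun k x ↦ by
    by_cases h : R k ≤ f x
    · simp [h]
    · simp [posPart_eq_zero.2 (sub_nonpos.2 (not_le.1 h).le)]
  calc ∫⁻ x, ENNReal.ofReal (rampSum R (f x)) ∂ν
      = ∫⁻ x, ∑' k, ENNReal.ofReal (min 1 ((f x - R k)⁺ / 2 ^ k)) ∂ν := by
        refine lintegral_congr fun x ↦ ?_
        exact ENNReal.ofReal_tsum_of_nonneg (fun k ↦ by positivity) (summable_ramp hR _)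
    _ ≤ ∫⁻ x, ∑' k, {x | R k ≤ f x}.indicator 1 x ∂ν :=
        lintegral_mono fun x ↦ ENNReal.tsum_le_tsum fun k ↦ hterm k x
    _ = ∑' k, ν {x | R k ≤ f x} := by
        rw [lintegral_tsum fun k ↦ ?_]
        · simp_rw [lintegral_indicator_one (measurableSet_le measurable_const hf)]
        · exact (measurable_one.indicator (measurableSet_le measurable_const hf)).aemeasurable

end rampSum

section tail

variable {X : Type*} [MeasurableSpace X] {ν : Measure X} [IsFiniteMeasure ν] {f : X → ℝ}

lemma tendsto_measure_setOf_le_atTop (hf : Measurable f) :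
    Tendsto (fun R : ℝ ↦ ν {x | R ≤ f x}) atTop (𝓝 0) := by
  have hempty : (⋂ R : ℝ, {x | R ≤ f x}) = ∅ :=
    eq_empty_of_forall_notMem fun x hx ↦ by
      have h : f x + 1 ≤ f x := mem_iInter.1 hx (f x + 1)
      linarith
  simpa [hempty, Function.comp_def] using
    tendsto_measure_iInter_atTop (μ := ν) (s := fun R : ℝ ↦ {x | R ≤ f x}) (fun R ↦ (measurableSet_le measurable_const hf).nullMeasurableSet)
    (fun R S hRS x hx ↦ le_trans hRS hx) ⟨0, measure_ne_top ν _⟩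

lemma exists_measure_setOf_le_le_geometric (hf : Measurable f) :
    ∃ R : ℕ → ℝ, (∀ k, 0 ≤ R k) ∧ ∀ k, ν {x | R k ≤ f x} ≤ 2⁻¹ ^ k := by
  have : ∀ k : ℕ, ∃ R : ℝ, 0 ≤ R ∧ ν {x | R ≤ f x} ≤ 2⁻¹ ^ k := fun k ↦
    ((eventually_ge_atTop 0).and ((tendsto_measure_setOf_le_atTop hf).eventually
      (eventually_le_nhds (ENNReal.pow_pos (by norm_num) k)))).exists
  choose R hR using this
  exact ⟨R, fun k ↦ (hR k).1, fun k ↦ (hR k).2⟩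

theorem exists_lipschitzWith_tendsto_integrable_comp (hf : Measurable f) :
    ∃ ψ : ℝ → ℝ, LipschitzWith 2 ψ ∧ (∀ r, 0 ≤ ψ r) ∧ Tendsto ψ atTop atTop ∧
      Integrable (fun x ↦ ψ (f x)) ν := by
  obtain ⟨R, hR₀, hR⟩ := exists_measure_setOf_le_le_geometric (ν := ν) hf
  refine ⟨rampSum R, lipschitzWith_rampSum hR₀, rampSum_nonneg, tendsto_rampSum hR₀, ?_⟩
  refine ⟨((lipschitzWith_rampSum hR₀).continuous.measurable.comp hf).aestronglyMeasurable, ?_⟩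
  rw [hasFiniteIntegral_iff_ofReal (ae_of_all _ fun x ↦ rampSum_nonneg _)]
  calc ∫⁻ x, ENNReal.ofReal (rampSum R (f x)) ∂ν ≤ ∑' k, ν {x | R k ≤ f x} :=
        lintegral_rampSum_comp_le ν hf hR₀
    _ ≤ ∑' k : ℕ, 2⁻¹ ^ k := ENNReal.tsum_le_tsum hR
    _ < ∞ := tsum_geometric_lt_top.2 (by norm_num)

end tail

section convolution

variable {𝕜 G E E' F : Type*} [NontriviallyNormedField 𝕜]
  [NormedAddCommGroup E] [NormedSpace 𝕜 E] [NormedAddCommGroup E'] [NormedSpace 𝕜 E']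
  [NormedAddCommGroup F] [NormedSpace 𝕜 F] [NormedSpace ℝ F]
  [NormedAddCommGroup G] [MeasurableSpace G] {μ : Measure G}
  {f : G → E} {g : G → E'} {K : ℝ≥0}

theorem LipschitzWith.convolution_right (L : E →L[𝕜] E' →L[𝕜] F) (hg : LipschitzWith K g)
    (hf : Integrable f μ) (hfg : ConvolutionExists f g L μ) :
    LipschitzWith (‖L‖₊ * (∫ t, ‖f t‖ ∂μ).toNNReal * K) (f ⋆[L, μ] g) := by
  refine LipschitzWith.of_dist_le_mul fun x y ↦ ?_
  have hbound : ∀ t, ‖L (f t) (g (x - t)) - L (f t) (g (y - t))‖ ≤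
      ‖L‖ * ‖f t‖ * (K * dist x y) := fun t ↦ by
    rw [← map_sub]
    refine (L (f t)).le_of_opNorm_le (L.le_opNorm (f t)) _ |>.trans ?_
    gcongr
    simpa [dist_eq_norm] using hg.dist_le_mul (x - t) (y - t)
  rw [dist_eq_norm, convolution_def, convolution_def, ← integral_sub (hfg x) (hfg y)]
  refine (norm_integral_le_of_norm_le ((hf.norm.const_mul _).mul_const _)
    (ae_of_all _ hbound)).trans_eq ?_
  rw [integral_mul_const, integral_const_mul, NNReal.coe_mul, NNReal.coe_mul,
    Real.coe_toNNReal _ (integral_nonneg fun t ↦ norm_nonneg _), coe_nnnorm]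
  ring

end convolution

namespace ContDiffBump

variable {E : Type*} [NormedAddCommGroup E] [NormedSpace ℝ E] [FiniteDimensional ℝ E]
  [MeasurableSpace E] {μ : Measure E} (φ : ContDiffBump (0 : E)) {g : E → ℝ} {K : ℝ≥0}

lemma normed_convolution_nonneg (hg : ∀ x, 0 ≤ g x) (x : E) :
    0 ≤ (φ.normed μ ⋆[lsmul ℝ ℝ, μ] g) x :=
  integral_nonneg fun t ↦ mul_nonneg (φ.nonneg_normed t) (hg _)

variable [BorelSpace E] [μ.IsAddHaarMeasure]

lemma contDiff_normed_convolution (hg : Continuous g) {n : ℕ∞} :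
    ContDiff ℝ n (φ.normed μ ⋆[lsmul ℝ ℝ, μ] g) :=
  φ.hasCompactSupport_normed.contDiff_convolution_left _ φ.contDiff_normed hg.locallyIntegrable

lemma dist_normed_convolution_le_of_lipschitzWith (hg : LipschitzWith K g) (x : E) :
    dist ((φ.normed μ ⋆[lsmul ℝ ℝ, μ] g) x) (g x) ≤ K * φ.rOut :=
  φ.dist_normed_convolution_le hg.continuous.aestronglyMeasurable fun y hy ↦
    (hg.dist_le_mul y x).trans (by gcongr; exact (mem_ball.1 hy).le)

lemma lipschitzWith_normed_convolution (hg : LipschitzWith K g) :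
    LipschitzWith K (φ.normed μ ⋆[lsmul ℝ ℝ, μ] g) := by
  have hnorm : ∫ t, ‖φ.normed μ t‖ ∂μ = 1 := by
    simp_rw [Real.norm_of_nonneg (φ.nonneg_normed _), φ.integral_normed]
  have h := hg.convolution_right (lsmul ℝ ℝ) (φ.integrable_normed (μ := μ))
    (φ.hasCompactSupport_normed.convolutionExists_left _ φ.continuous_normed
      hg.continuous.locallyIntegrable)
  rw [hnorm, Real.toNNReal_one, mul_one] at h
  exact h.weaken (mul_le_of_le_one_left' opNNNorm_lsmul_le)

lemma fderiv_normed_convolution (hg : Continuous g) :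
    fderiv ℝ (φ.normed μ ⋆[lsmul ℝ ℝ, μ] g) =
      fderiv ℝ (φ.normed μ) ⋆[(lsmul ℝ ℝ).precompL E, μ] g :=
  funext fun x ↦ (φ.hasCompactSupport_normed.hasFDerivAt_convolution_left _
    φ.contDiff_normed hg.locallyIntegrable x).fderiv

lemma exists_lipschitzWith_fderiv_normed_convolution (hg : LipschitzWith K g) :
    ∃ C, LipschitzWith C (fderiv ℝ (φ.normed μ ⋆[lsmul ℝ ℝ, μ] g)) := by
  have hc : Continuous (fderiv ℝ (φ.normed μ)) := φ.contDiff_normed.continuous_fderiv one_ne_zero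
  have hs : HasCompactSupport (fderiv ℝ (φ.normed μ)) := φ.hasCompactSupport_normed.fderiv ℝ
  rw [φ.fderiv_normed_convolution hg.continuous]
  exact ⟨_, hg.convolution_right _ (hc.integrable_of_hasCompactSupport hs)
    (hs.convolutionExists_left _ hc hg.continuous.locallyIntegrable)⟩

end ContDiffBump

lemma isCompact_setOf_le_of_dist_le {E : Type*} [NormedAddCommGroup E] [ProperSpace E]
    {V : E → ℝ} {ψ : ℝ → ℝ} {B : ℝ} (hV : Continuous V) (hψ : Tendsto ψ atTop atTop)
    (hB : ∀ x, dist (V x) (ψ ‖x‖) ≤ B) (c : ℝ) :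
    IsCompact {x | V x ≤ c} := by
  obtain ⟨R, hR⟩ := eventually_atTop.1 (hψ.eventually_gt_atTop (c + B))
  refine (isCompact_closedBall (0 : E) R).of_isClosed_subset
    (isClosed_le hV continuous_const) fun x hx ↦ ?_
  rw [mem_closedBall_zero_iff]
  by_contra! hxR
  have hψx := hR _ hxR.le
  have hVx := (abs_le.1 (hB x)).1
  have hx : V x ≤ c := hx
  linarith

lemma MeasureTheory.Integrable.of_dist_le {X : Type*} [MeasurableSpace X] {ν : Measure X}
    [IsFiniteMeasure ν] {V W : X → ℝ} {B : ℝ}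
    (hW : Integrable W ν) (hV : AEStronglyMeasurable V ν) (hB : ∀ x, dist (V x) (W x) ≤ B) :
    Integrable V ν := by
  refine Integrable.mono' (hW.norm.add (integrable_const B)) hV (ae_of_all _ fun x ↦ ?_)
  have := abs_sub_abs_le_abs_sub (V x) (W x)
  simp only [Real.norm_eq_abs, Pi.add_apply]
  linarith [Real.dist_eq (V x) (W x) ▸ hB x]

/-- For every subprobability measure `ν` on `ℝ^d` there is a nonnegative `C²` function `V`
with compact sublevel sets, uniformly bounded first and second order derivatives, and
`∫ V dν < ∞`. -/
theorem exists_lyapunov_function (d : ℕ)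
    (ν : Measure (EuclideanSpace ℝ (Fin d))) (hν : ν Set.univ ≤ 1) :
    ∃ V : EuclideanSpace ℝ (Fin d) → ℝ,
      (∀ x, 0 ≤ V x) ∧ ContDiff ℝ 2 V ∧
      (∀ c : ℝ, 0 ≤ c → IsCompact {x | V x ≤ c}) ∧
      (∃ C : ℝ, ∀ x, ‖fderiv ℝ V x‖ ≤ C ∧ ‖fderiv ℝ (fderiv ℝ V) x‖ ≤ C) ∧
      Integrable V ν := by
  have : IsFiniteMeasure ν := ⟨hν.trans_lt ENNReal.one_lt_top⟩
  obtain ⟨ψ, hψ_lip, hψ_nonneg, hψ_top, hψ_int⟩ :=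
    exists_lipschitzWith_tendsto_integrable_comp (ν := ν) measurable_norm
  have hW : LipschitzWith 2 fun x : EuclideanSpace ℝ (Fin d) ↦ ψ ‖x‖ := by
    have h := hψ_lip.comp (lipschitzWith_one_norm (E := EuclideanSpace ℝ (Fin d)))
    rwa [mul_one] at h
  let ρ : ContDiffBump (0 : EuclideanSpace ℝ (Fin d)) := ⟨1, 2, one_pos, one_lt_two⟩
  have hclose := ρ.dist_normed_convolution_le_of_lipschitzWith (μ := volume) hW
  have hV : ContDiff ℝ 2 (ρ.normed volume ⋆[lsmul ℝ ℝ, volume] fun x ↦ ψ ‖x‖) :=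
    ρ.contDiff_normed_convolution hW.continuous
  obtain ⟨C, hC⟩ := ρ.exists_lipschitzWith_fderiv_normed_convolution (μ := volume) hW
  refine ⟨_, ρ.normed_convolution_nonneg fun x ↦ hψ_nonneg _, hV,
    fun c _ ↦ isCompact_setOf_le_of_dist_le hV.continuous hψ_top hclose c,
    ⟨max 2 C, fun x ↦ ⟨?_, ?_⟩⟩, hψ_int.of_dist_le hV.continuous.aestronglyMeasurable hclose⟩
  · exact (norm_fderiv_le_of_lipschitz ℝ (ρ.lipschitzWith_normed_convolution hW)).trans
      (le_max_left _ _)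
  · exact (norm_fderiv_le_of_lipschitz ℝ hC).trans (le_max_right _ _)
end

section
/- Let f : X → ℝ be upper semicontinuous on a separable metric space X. Then the map K ↦ sup_{x∈K} f(x) from the space comp(X) of nonempty compact subsets of X with the Hausdorff metric to ℝ, and the map K ↦ {x ∈ K : f(x) = sup_{y∈K} f(y)} from comp(X) to comp(X), are both Borel measurable. -/
/-!
The topology of the Hausdorff metric on nonempty compact sets is the Vietoris topology.
Since `sSup (f '' K) < b` iff `K ⊆ {f < b}`, an open condition on `K`, the supremum is upper
semicontinuous in `K`, hence Borel.

For a second countable `X`, the Borel σ-algebra of the Vietoris topology is generated by the sets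
`{K | K ⊆ U}` and `{K | K ∩ U ≠ ∅}` with `U` open, and in a perfectly normal space every open set
is a countable union of closed sets. So it suffices to see that "the argmax of `f` on `K` meets the
closed set `C`" is a Borel condition on `K`. By compactness of `K ∩ C` it says that for every
rational `q` below `sSup (f '' K)`, the set `K` meets the closed set `C ∩ {f ≥ q}`.
-/

open Set MeasureTheory TopologicalSpace

namespace TopologicalSpace.NonemptyCompacts

variable {α : Type*} [TopologicalSpace α]

theorem borel_eq_generateFrom_subsets_inter_nonempty [SecondCountableTopology α] :
    borel (NonemptyCompacts α) = .generateFrom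
      ((fun U => {K : NonemptyCompacts α | (K : Set α) ⊆ U}) '' {U | IsOpen U} ∪
        (fun U => {K : NonemptyCompacts α | ((K : Set α) ∩ U).Nonempty}) '' {U | IsOpen U}) := by
  refine borel_eq_generateFrom_of_subbasis ?_
  rw [NonemptyCompacts.topology, TopologicalSpace.vietoris, induced_generateFrom_eq, image_union,
    image_image, image_image]
  rfl

theorem measurable_of_measurableSet_subsets_inter_nonempty {β : Type*} [MeasurableSpace β]
    [SecondCountableTopology α] [MeasurableSpace (NonemptyCompacts α)]
    [BorelSpace (NonemptyCompacts α)] {G : β → NonemptyCompacts α}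
    (hsub : ∀ U, IsOpen U → MeasurableSet {b | (G b : Set α) ⊆ U})
    (hinter : ∀ U, IsOpen U → MeasurableSet {b | ((G b : Set α) ∩ U).Nonempty}) :
    Measurable G := by
  rw [BorelSpace.measurable_eq (α := NonemptyCompacts α),
    borel_eq_generateFrom_subsets_inter_nonempty]
  refine measurable_generateFrom ?_
  rintro _ (⟨U, hU, rfl⟩ | ⟨U, hU, rfl⟩)
  exacts [hsub U hU, hinter U hU]

end TopologicalSpace.NonemptyCompacts

namespace UpperSemicontinuous

variable {X : Type*} [TopologicalSpace X] {f : X → ℝ}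

theorem exists_sSup_image_eq (hf : UpperSemicontinuous f) {s : Set X} (hs : IsCompact s)
    (hne : s.Nonempty) : ∃ x ∈ s, sSup (f '' s) = f x := by
  obtain ⟨x, hx, hmax⟩ := (hf.upperSemicontinuousOn _).exists_isMaxOn hne hs
  exact ⟨x, hx, IsGreatest.csSup_eq ⟨mem_image_of_mem f hx, forall_mem_image.2 hmax⟩⟩

theorem le_sSup_image (hf : UpperSemicontinuous f) {s : Set X} (hs : IsCompact s) {x : X}
    (hx : x ∈ s) : f x ≤ sSup (f '' s) :=
  le_csSup ((hf.upperSemicontinuousOn _).bddAbove_of_isCompact hs) (mem_image_of_mem f hx)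

theorem upperSemicontinuous_sSup_image (hf : UpperSemicontinuous f) :
    UpperSemicontinuous fun K : NonemptyCompacts X => sSup (f '' K) := by
  refine upperSemicontinuous_iff_isOpen_preimage.2 fun b => ?_
  convert NonemptyCompacts.isOpen_subsets_of_isOpen (hf.isOpen_preimage b) using 1
  ext K
  obtain ⟨x, hx, hxK⟩ := hf.exists_sSup_image_eq K.isCompact K.nonempty
  simp only [mem_preimage, mem_Iio, mem_ofPred_eq, hxK]
  exact ⟨fun h y hy => (hf.le_sSup_image K.isCompact hy).trans_lt (hxK ▸ h), fun h => h hx⟩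

theorem isCompact_argmax (hf : UpperSemicontinuous f) {s : Set X} (hs : IsCompact s) :
    IsCompact {x ∈ s | f x = sSup (f '' s)} := by
  convert hs.inter_right (hf.isClosed_preimage (sSup (f '' s))) using 1
  ext x
  exact and_congr_right fun hx => ⟨ge_of_eq, (hf.le_sSup_image hs hx).antisymm⟩

def argmax (hf : UpperSemicontinuous f) (K : NonemptyCompacts X) : NonemptyCompacts X :=
  ⟨⟨{x ∈ (K : Set X) | f x = sSup (f '' K)}, hf.isCompact_argmax K.isCompact⟩,
    let ⟨x, hx, hxK⟩ := hf.exists_sSup_image_eq K.isCompact K.nonempty; ⟨x, hx, hxK.symm⟩⟩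

theorem argmax_inter_nonempty_iff (hf : UpperSemicontinuous f) (K : NonemptyCompacts X)
    {C : Set X} (hC : IsClosed C) :
    ((hf.argmax K : Set X) ∩ C).Nonempty ↔
      ∀ q : ℚ, sSup (f '' K) ≤ q ∨ ((K : Set X) ∩ (C ∩ f ⁻¹' Ici (q : ℝ))).Nonempty := by
  constructor
  · rintro ⟨x, ⟨hxK, hxmax⟩, hxC⟩ q
    refine (le_or_gt _ _).imp_right fun hq => ⟨x, hxK, hxC, ?_⟩
    rw [mem_preimage, mem_Ici, hxmax]
    exact hq.le
  · intro h
    obtain ⟨q, hq⟩ := exists_rat_lt (sSup (f '' K))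
    have hKC : ((K : Set X) ∩ C).Nonempty :=
      ((h q).resolve_left hq.not_ge).mono (inter_subset_inter_right _ inter_subset_left)
    obtain ⟨x, hx, hmax⟩ :=
      (hf.upperSemicontinuousOn _).exists_isMaxOn hKC (K.isCompact.inter_right hC)
    refine ⟨x, ⟨hx.1, (hf.le_sSup_image K.isCompact hx.1).antisymm ?_⟩, hx.2⟩
    by_contra! hlt
    obtain ⟨r, hxr, hrK⟩ := exists_rat_btwn hlt
    obtain ⟨y, hyK, hyC, hry⟩ := (h r).resolve_left hrK.not_ge
    exact (hmax ⟨hyK, hyC⟩).not_gt (hxr.trans_le hry)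

section OpensMeasurable

variable [MeasurableSpace (NonemptyCompacts X)] [OpensMeasurableSpace (NonemptyCompacts X)]

theorem measurableSet_argmax_inter_nonempty_of_isClosed (hf : UpperSemicontinuous f) {C : Set X}
    (hC : IsClosed C) : MeasurableSet {K | ((hf.argmax K : Set X) ∩ C).Nonempty} := by
  simp_rw [hf.argmax_inter_nonempty_iff _ hC, ofPred_forall, ofPred_or]
  exact .iInter fun q =>
    (measurableSet_le hf.upperSemicontinuous_sSup_image.measurable measurable_const).union
      (NonemptyCompacts.isClosed_inter_nonempty_of_isClosed
        (hC.inter (hf.isClosed_preimage q))).measurableSet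

theorem measurableSet_argmax_inter_nonempty [PerfectlyNormalSpace X] (hf : UpperSemicontinuous f)
    {U : Set X} (hU : IsOpen U) : MeasurableSet {K | ((hf.argmax K : Set X) ∩ U).Nonempty} := by
  obtain ⟨T, hTopen, hTcount, hT⟩ := hU.isClosed_compl.isGδ
  rw [← compl_compl U, hT, compl_sInter, sUnion_image]
  simp_rw [inter_iUnion₂, nonempty_iUnion, ofPred_exists]
  exact .biUnion hTcount fun t ht =>
    hf.measurableSet_argmax_inter_nonempty_of_isClosed (hTopen t ht).isClosed_compl

end OpensMeasurable

theorem measurable_argmax [SecondCountableTopology X] [PerfectlyNormalSpace X]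
    [MeasurableSpace (NonemptyCompacts X)] [BorelSpace (NonemptyCompacts X)]
    (hf : UpperSemicontinuous f) : Measurable hf.argmax := by
  refine NonemptyCompacts.measurable_of_measurableSet_subsets_inter_nonempty (fun V hV => ?_)
    fun U hU => hf.measurableSet_argmax_inter_nonempty hU
  simpa only [inter_compl_nonempty_iff, compl_ofPred, not_not] using
    (hf.measurableSet_argmax_inter_nonempty_of_isClosed hV.isClosed_compl).compl

end UpperSemicontinuous

/-- For an upper semicontinuous `f : X → ℝ` on a separable metric space, the map
`K ↦ sup_{x∈K} f(x)` on the space `comp(X)` of nonempty compact subsets of `X` with the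
Hausdorff metric is Borel measurable, and so is the map sending `K` to its (compact, nonempty)
set of maximizers of `f`. -/
theorem measurable_sup_and_argmax {X : Type*} [MetricSpace X] [SeparableSpace X]
    (f : X → ℝ) (hf : UpperSemicontinuous f) :
    @Measurable (NonemptyCompacts X) ℝ (borel _) _
        (fun K => sSup (f '' (K : Set X))) ∧
      ∃ F : NonemptyCompacts X → NonemptyCompacts X,
        @Measurable (NonemptyCompacts X) (NonemptyCompacts X) (borel _) (borel _) F ∧
        ∀ K : NonemptyCompacts X,
          (F K : Set X) = {x ∈ (K : Set X) | f x = sSup (f '' (K : Set X))} := by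
  borelize (NonemptyCompacts X)
  exact ⟨hf.upperSemicontinuous_sSup_image.measurable, hf.argmax, hf.measurable_argmax,
    fun _ => rfl⟩
end

section
/- Let Y be a metric space, X a separable metric space, and y ↦ K_y a map from Y to comp(X) such that: whenever y_n → y in Y and x_n ∈ K_{y_n}, the sequence (x_n) has a limit point x belonging to K_y. Then y ↦ K_y is Borel measurable from Y to (comp(X), d_H). -/
/-!
The Hausdorff edistance is `d(K_y, C) = (⨆ x ∈ K_y, d(x, C)) ⊔ ⨆ c ∈ C, d(c, K_y)`. The
limit-point hypothesis makes the first term upper semicontinuous in `y` and each `d(c, K_y)`,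
hence also their supremum, lower semicontinuous, so `y ↦ d(K_y, C)` is Borel. As `comp(X)` is
second countable, every open set in it is a countable union of balls, whose preimages are then
Borel.
-/

open TopologicalSpace Filter Metric Set Topology

section

variable {Y X : Type*} [TopologicalSpace Y] [TopologicalSpace X]

/-- The sequential characterisation of upper hemicontinuity for compact-valued correspondences. -/
def SeqUpperHemicontinuous (K : Y → Set X) : Prop :=
  ∀ (y : ℕ → Y) (y₀ : Y) (x : ℕ → X), Tendsto y atTop (𝓝 y₀) → (∀ n, x n ∈ K (y n)) →
    ∃ x₀ ∈ K y₀, MapClusterPt x₀ atTop x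

variable [FirstCountableTopology Y] {α : Type*} [CompleteLinearOrder α] [DenselyOrdered α]
  {K : Y → Set X}

theorem SeqUpperHemicontinuous.upperSemicontinuous_biSup (hK : SeqUpperHemicontinuous K)
    {f : X → α} (hf : UpperSemicontinuous f) : UpperSemicontinuous fun y => ⨆ x ∈ K y, f x := by
  intro y₀ L hL
  by_contra hcon
  obtain ⟨y, hy_lim, hy⟩ := exists_seq_forall_of_frequently (not_eventually.1 hcon)
  obtain ⟨L', hL'₀, hL'⟩ := exists_between hL
  have hx : ∀ n, ∃ x ∈ K (y n), L' < f x := fun n =>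
    lt_biSup_iff.1 (hL'.trans_le (not_lt.1 (hy n)))
  choose x hxK hxL' using hx
  obtain ⟨x₀, hx₀K, hx₀⟩ := hK y y₀ x hy_lim hxK
  have hfreq : ∃ᶠ n in atTop, f (x n) < L' :=
    mapClusterPt_iff_frequently.1 hx₀ _ (hf x₀ L' ((le_biSup f hx₀K).trans_lt hL'₀))
  exact hfreq.exists.elim fun n hn => (hxL' n).not_gt hn

theorem SeqUpperHemicontinuous.lowerSemicontinuous_biInf (hK : SeqUpperHemicontinuous K)
    {f : X → α} (hf : LowerSemicontinuous f) : LowerSemicontinuous fun y => ⨅ x ∈ K y, f x :=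
  hK.upperSemicontinuous_biSup (α := αᵒᵈ) hf

end

section

variable {Y X : Type*} [TopologicalSpace Y] [FirstCountableTopology Y] [PseudoEMetricSpace X]
  [MeasurableSpace Y] [OpensMeasurableSpace Y] {K : Y → Set X}

theorem SeqUpperHemicontinuous.measurable_hausdorffEDist (hK : SeqUpperHemicontinuous K)
    (C : Set X) : Measurable fun y => hausdorffEDist (K y) C := by
  simp only [hausdorffEDist_def]
  have hsup : UpperSemicontinuous fun y => ⨆ x ∈ K y, infEDist x C :=
    hK.upperSemicontinuous_biSup (continuous_infEDist (s := C)).upperSemicontinuous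
  have hinf : LowerSemicontinuous fun y => ⨆ c ∈ C, infEDist c (K y) :=
    lowerSemicontinuous_biSup fun c _ =>
      hK.lowerSemicontinuous_biInf (continuous_const.edist continuous_id).lowerSemicontinuous
  exact hsup.measurable.sup hinf.measurable

end

theorem measurable_of_measurable_edist {Y Z : Type*} [MeasurableSpace Y] [PseudoEMetricSpace Z]
    [SecondCountableTopology Z] [MeasurableSpace Z] [BorelSpace Z] {f : Y → Z}
    (hf : ∀ z, Measurable fun y => edist (f y) z) : Measurable f := by
  refine measurable_of_isOpen fun U hU => ?_
  let B : {p : Z × ENNReal // eball p.1 p.2 ⊆ U} → Set Z := fun p => eball p.1.1 p.1.2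
  obtain ⟨T, hTc, hTU⟩ := isOpen_iUnion_countable B fun p => isOpen_eball
  have hU_eq : U = ⋃ p, B p := by
    refine Subset.antisymm (fun z hz => ?_) (iUnion_subset fun p => p.2)
    obtain ⟨ε, hε, hball⟩ := EMetric.isOpen_iff.1 hU z hz
    exact mem_iUnion.2 ⟨⟨(z, ε), hball⟩, mem_eball_self hε⟩
  rw [hU_eq, ← hTU, preimage_iUnion₂]
  exact .biUnion hTc fun p _ => measurableSet_lt (hf p.1.1) measurable_const

/-- Let `y ↦ K_y` map a metric space `Y` to the nonempty compact subsets of a separable metric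
space `X` (with the Hausdorff metric). If whenever `y_n → y` and `x_n ∈ K_{y_n}` the sequence
`(x_n)` has a limit point belonging to `K_y`, then `y ↦ K_y` is Borel measurable. -/
theorem measurable_of_limit_points {Y X : Type*} [MetricSpace Y] [MetricSpace X]
    [SeparableSpace X]
    (K : Y → NonemptyCompacts X)
    (h : ∀ (y : ℕ → Y) (y₀ : Y) (x : ℕ → X),
      Tendsto y atTop (nhds y₀) → (∀ n, x n ∈ (K (y n) : Set X)) →
      ∃ x₀ ∈ (K y₀ : Set X), MapClusterPt x₀ atTop x) :
    @Measurable Y (NonemptyCompacts X) (borel Y) (borel _) K := by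
  borelize Y (NonemptyCompacts X)
  have hK : SeqUpperHemicontinuous fun y => (K y : Set X) := h
  exact measurable_of_measurable_edist fun C => hK.measurable_hausdorffEDist C
end

section
/- Let (E, F) be a measurable space, X a separable metric space, and q ↦ K_q a measurable map from E to the space comp(X) of nonempty compact subsets of X with the Hausdorff metric. Then there exists an F/Borel(X)-measurable map h : E → X with h(q) ∈ K_q for every q ∈ E. -/
/-!
Fix a dense sequence `x` in `X` and choose, by recursion on `k`, the least index `n` such that
`infDist (x n) K_q < 2⁻ᵏ` and, if the previous point was already `2⁻⁽ᵏ⁻¹⁾`-close to `K_q`,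
`x n` lies within `3 · 2⁻ᵏ` of it. The implication makes the condition satisfiable for every
previous point, so the recursion is a total `Nat.find`, and it only involves the maps
`q ↦ infDist y K_q`, which are Lipschitz for the Hausdorff metric; hence every index map is
measurable. For fixed `q` the chosen
points form a Cauchy sequence shadowing one in the complete set `K_q`, and the measurable
selection is their pointwise limit.
-/

open TopologicalSpace Metric Filter
open scoped Topology

theorem DenseRange.exists_infDist_lt_and_dist_lt {X : Type*} [PseudoMetricSpace X] {x : ℕ → X}
    (hx : DenseRange x) {s : Set X} (hs : s.Nonempty) {r : ℝ} (hr : 0 < r) (p : X) :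
    ∃ n, infDist (x n) s < r ∧ (infDist p s < 2 * r → dist (x n) p < 3 * r) := by
  by_cases hp : infDist p s < 2 * r
  · obtain ⟨y, hys, hpy⟩ := (infDist_lt_iff hs).1 hp
    obtain ⟨n, hyn⟩ := hx.exists_dist_lt y hr
    rw [dist_comm] at hyn
    refine ⟨n, (infDist_le_dist_of_mem hys).trans_lt hyn, fun _ => ?_⟩
    calc dist (x n) p ≤ dist (x n) y + dist p y := dist_triangle_right _ _ _
      _ < r + 2 * r := add_lt_add hyn hpy
      _ = 3 * r := by ring
  · obtain ⟨y, hys⟩ := hs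
    obtain ⟨n, hyn⟩ := hx.exists_dist_lt y hr
    rw [dist_comm] at hyn
    exact ⟨n, (infDist_le_dist_of_mem hys).trans_lt hyn, fun h => absurd h hp⟩

theorem IsComplete.exists_mem_tendsto_of_infDist_lt {X : Type*} [PseudoMetricSpace X]
    {s : Set X} (hs : IsComplete s) (hne : s.Nonempty) {u : ℕ → X}
    (hinf : ∀ k, infDist (u k) s < (1 / 2) ^ k)
    (hu : ∀ k, dist (u (k + 1)) (u k) < 3 * (1 / 2) ^ (k + 1)) :
    ∃ z ∈ s, Tendsto u atTop (𝓝 z) := by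
  choose y hys hy using fun k => (infDist_lt_iff hne).1 (hinf k)
  have hcauchy : CauchySeq y := by
    refine cauchySeq_of_le_geometric_two (C := 6) fun k => ?_
    calc dist (y k) (y (k + 1))
        ≤ dist (y k) (u k) + dist (u k) (u (k + 1)) + dist (u (k + 1)) (y (k + 1)) :=
          dist_triangle4 _ _ _ _
      _ ≤ (1 / 2) ^ k + 3 * (1 / 2) ^ (k + 1) + (1 / 2) ^ (k + 1) := by
          rw [dist_comm (y k) (u k), dist_comm (u k) (u (k + 1))]
          gcongr
          exacts [(hy k).le, (hu k).le, (hy (k + 1)).le]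
      _ = 6 / 2 / 2 ^ k := by rw [pow_succ, div_pow, one_pow]; field_simp; ring
  obtain ⟨z, hzs, hyz⟩ := cauchySeq_tendsto_of_isComplete hs hys hcauchy
  refine ⟨z, hzs, hyz.congr_dist <| squeeze_zero (fun _ => dist_nonneg)
    (fun k => (dist_comm _ _).trans_le (hy k).le) ?_⟩
  exact tendsto_pow_atTop_nhds_zero_of_lt_one (by norm_num) (by norm_num)

theorem measurable_apply_of_countable {E β γ : Type*} [MeasurableSpace E] [MeasurableSpace β]
    [Countable β] [MeasurableSingletonClass β] [MeasurableSpace γ] {f : E → β → γ}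
    (hf : ∀ b, Measurable (f · b)) {g : E → β} (hg : Measurable g) :
    Measurable fun q => f q (g q) :=
  (measurable_from_prod_countable_left (f := fun a : E × β => f a.1 a.2) hf).comp
    (measurable_id.prodMk hg)

namespace DenseRange

variable {E X : Type*} [PseudoMetricSpace X] {x : ℕ → X} (hx : DenseRange x) {K : E → Set X}
  (hK : ∀ q, (K q).Nonempty)

open scoped Classical in
noncomputable def approxIndex : ℕ → E → ℕ
  | 0, q => Nat.find (hx.exists_infDist_lt_and_dist_lt (hK q) one_pos (x 0))
  | k + 1, q => Nat.find (hx.exists_infDist_lt_and_dist_lt (hK q)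
      (pow_pos one_half_pos (k + 1)) (x (approxIndex k q)))

theorem infDist_approxIndex_lt (k : ℕ) (q : E) :
    infDist (x (hx.approxIndex hK k q)) (K q) < (1 / 2) ^ k := by
  cases k with
  | zero => simpa [approxIndex] using
      (Nat.find_spec (hx.exists_infDist_lt_and_dist_lt (hK q) one_pos (x 0))).1
  | succ k => exact (Nat.find_spec (hx.exists_infDist_lt_and_dist_lt (hK q)
      (pow_pos one_half_pos (k + 1)) (x (hx.approxIndex hK k q)))).1

theorem dist_approxIndex_succ_lt (k : ℕ) (q : E) :
    dist (x (hx.approxIndex hK (k + 1) q)) (x (hx.approxIndex hK k q))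
      < 3 * (1 / 2) ^ (k + 1) := by
  refine (Nat.find_spec (hx.exists_infDist_lt_and_dist_lt (hK q)
      (pow_pos one_half_pos (k + 1)) (x (hx.approxIndex hK k q)))).2 ?_
  convert hx.infDist_approxIndex_lt hK k q using 1
  ring

theorem measurable_approxIndex [MeasurableSpace E]
    (hm : ∀ y, Measurable fun q => infDist y (K q)) (k : ℕ) :
    Measurable (hx.approxIndex hK k) := by
  have hstep : ∀ r : ℝ, ∀ n m, Measurable fun q =>
      infDist (x n) (K q) < r ∧ (infDist (x m) (K q) < 2 * r → dist (x n) (x m) < 3 * r) :=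
    fun _ _ _ => ((hm _).lt measurable_const).and
      (((hm _).lt measurable_const).imp measurable_const)
  induction k with
  | zero => exact measurable_find _ fun n => measurableSet_setOfPred.2 (hstep 1 n 0)
  | succ k ih =>
    exact measurable_find _ fun n => measurableSet_setOfPred.2
      (measurable_apply_of_countable (hstep _ n) ih)

end DenseRange

theorem exists_measurable_selection_of_measurable_infDist {E X : Type*} [MeasurableSpace E]
    [PseudoMetricSpace X] [SeparableSpace X] [MeasurableSpace X] [BorelSpace X] {K : E → Set X}
    (hne : ∀ q, (K q).Nonempty) (hc : ∀ q, IsComplete (K q))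
    (hm : ∀ y, Measurable fun q => infDist y (K q)) :
    ∃ h : E → X, Measurable h ∧ ∀ q, h q ∈ K q := by
  rcases isEmpty_or_nonempty E with hE | ⟨⟨q₀⟩⟩
  · exact ⟨isEmptyElim, measurable_of_empty _, isEmptyElim⟩
  have : Nonempty X := ⟨(hne q₀).some⟩
  obtain ⟨x, hx⟩ := exists_dense_seq X
  have hlim : ∀ q, ∃ z ∈ K q, Tendsto (fun k => x (hx.approxIndex hne k q)) atTop (𝓝 z) :=
    fun q => (hc q).exists_mem_tendsto_of_infDist_lt (hne q) (hx.infDist_approxIndex_lt hne · q)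
      (hx.dist_approxIndex_succ_lt hne · q)
  choose h hmem htends using hlim
  exact ⟨h, measurable_of_tendsto_metrizable
    (fun k => measurable_from_top.comp (hx.measurable_approxIndex hne hm k))
    (tendsto_pi_nhds.2 htends), hmem⟩

/-- Measurable selection: if `q ↦ K_q` is a measurable map from a measurable space `E` to the
nonempty compact subsets of a separable metric space `X` (with the Borel σ-algebra of the
Hausdorff metric), then there is a measurable `h : E → X` with `h q ∈ K_q` for every `q`. -/
theorem exists_measurable_selection {E X : Type*} [MeasurableSpace E] [MetricSpace X]
    [SeparableSpace X]
    (K : E → NonemptyCompacts X)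
    (hK : @Measurable E (NonemptyCompacts X) _ (borel _) K) :
    ∃ h : E → X, @Measurable E X _ (borel X) h ∧ ∀ q, h q ∈ (K q : Set X) := by
  borelize X (NonemptyCompacts X)
  exact exists_measurable_selection_of_measurable_infDist (fun q => (K q).nonempty)
    (fun q => (K q).isCompact.isComplete)
    fun y => (lipschitz_infDist_set y).continuous.measurable.comp hK
end
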